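/- arXiv:0708.2685 — 3 statements merged into one kernel-verified Lean document; each statement's English description precedes it below -/
import Mathlib

section
/- Let A be a Hopf algebra over a field of characteristic zero, x, y ∈ A with Δ(x)=x⊗1+a⊗x, Δ(y)=y⊗1+b⊗y, where a, b commuting grouplikes, and gxg^{-1}=χ(g)x, gyg^{-1}=μ(g)y for characters χ, μ. If χ(b)μ(a) = χ(a)^{1-r} for some r ≥ 0, then z = ad(x)^r(y) is skew-primitive: Δ(z) = z⊗1 + a^r b ⊗ z. -/
/-!
Write `q = χ(a)`, `α = μ(a)`, `β = χ(b)` and `zₙ = ad(x)ⁿ(y)`. Conjugation by `a` scales `zₙ` by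
`qⁿα`, so `zₙ₊₁ = x zₙ - qⁿα zₙ x`, and since `Δ` is multiplicative an induction on `n` gives
`Δ(zₙ) = zₙ ⊗ 1 + ∑_{i+j=n} cᵢⱼ xⁱ aʲ b ⊗ zⱼ`
with `cᵢⱼ = [i+j choose i]_q ∏_{l<i} (1 - q^{j+l} αβ)` (`comulCoeff`). For `n = r` every term with
`i ≥ 1` contains the factor `1 - q^{r-1} αβ`, which vanishes by hypothesis.
-/

open TensorProduct Coalgebra Finset

namespace SkewPrimitive

variable {k : Type*} [CommRing k]

/-- The Gaussian binomial coefficient `[i+j choose i]_q`. -/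
def qBinom (q : k) : ℕ → ℕ → k
  | 0, _ => 1
  | _ + 1, 0 => 1
  | i + 1, j + 1 => qBinom q (i + 1) j + q ^ (j + 1) * qBinom q i (j + 1)

@[simp] lemma qBinom_zero_left (q : k) (j : ℕ) : qBinom q 0 j = 1 := by
  rw [qBinom]

@[simp] lemma qBinom_zero_right (q : k) (i : ℕ) : qBinom q i 0 = 1 := by
  cases i <;> rw [qBinom]

lemma qBinom_succ_succ (q : k) (i j : ℕ) :
    qBinom q (i + 1) (j + 1) = qBinom q (i + 1) j + q ^ (j + 1) * qBinom q i (j + 1) := by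
  rw [qBinom]

lemma one_sub_pow_mul_qBinom_succ_left (q : k) :
    ∀ i j, (1 - q ^ (i + 1)) * qBinom q (i + 1) j = (1 - q ^ (j + 1)) * qBinom q i (j + 1)
  | 0, 0 => by simp
  | 0, j + 1 => by
      have ih := one_sub_pow_mul_qBinom_succ_left q 0 j
      simp only [qBinom_succ_succ, qBinom_zero_left] at ih ⊢
      linear_combination ih
  | i + 1, 0 => by
      have ih := one_sub_pow_mul_qBinom_succ_left q i 0
      simp only [qBinom_succ_succ, qBinom_zero_right] at ih ⊢
      linear_combination q * ih
  | i + 1, j + 1 => by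
      have ih₁ := one_sub_pow_mul_qBinom_succ_left q (i + 1) j
      have ih₂ := one_sub_pow_mul_qBinom_succ_left q i (j + 1)
      rw [qBinom_succ_succ q (i + 1), qBinom_succ_succ q i (j + 1)]
      linear_combination ih₁ + q ^ (j + 2) * ih₂

def comulCoeff (q t : k) (i j : ℕ) : k :=
  qBinom q i j * ∏ l ∈ range i, (1 - q ^ (j + l) * t)

@[simp] lemma comulCoeff_zero_left (q t : k) (j : ℕ) : comulCoeff q t 0 j = 1 := by
  simp [comulCoeff]

lemma comulCoeff_succ_zero (q t : k) (i : ℕ) :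
    comulCoeff q t (i + 1) 0 = (1 - q ^ i * t) * comulCoeff q t i 0 := by
  simp only [comulCoeff, qBinom_zero_right, prod_range_succ, zero_add]
  ring

lemma comulCoeff_succ_succ (q t : k) (i j : ℕ) :
    comulCoeff q t (i + 1) (j + 1) =
      (1 - q ^ (i + 2 * (j + 1)) * t) * comulCoeff q t i (j + 1) +
        q ^ (i + 1) * comulCoeff q t (i + 1) j := by
  set P := ∏ l ∈ range i, (1 - q ^ (j + 1 + l) * t)
  have hP₁ : ∏ l ∈ range (i + 1), (1 - q ^ (j + 1 + l) * t) = P * (1 - q ^ (j + 1 + i) * t) :=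
    prod_range_succ _ i
  have hP₂ : ∏ l ∈ range (i + 1), (1 - q ^ (j + l) * t) = P * (1 - q ^ j * t) := by
    rw [prod_range_succ', add_zero]
    simp_rw [P, add_assoc, add_comm 1]
  simp only [comulCoeff, hP₁, hP₂, qBinom_succ_succ]
  linear_combination P * one_sub_pow_mul_qBinom_succ_left q i j

lemma comulCoeff_eq_zero {q t : k} {i j : ℕ} (h : q ^ (i + j) * t = 1) :
    comulCoeff q t (i + 1) j = 0 :=
  mul_eq_zero_of_right _ <| prod_eq_zero (self_mem_range_succ i) (by rw [add_comm, h, sub_self])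

lemma sum_antidiagonal_comulCoeff_smul {M : Type*} [AddCommMonoid M] [Module k M] (q t : k)
    (T : ℕ → ℕ → M) (n : ℕ) :
    ∑ p ∈ antidiagonal n, comulCoeff q t p.1 p.2 •
        ((1 - q ^ (p.1 + 2 * p.2) * t) • T (p.1 + 1) p.2 + q ^ p.1 • T p.1 (p.2 + 1)) =
      ∑ p ∈ antidiagonal (n + 1), comulCoeff q t p.1 p.2 • T p.1 p.2 := by
  simp only [smul_add, sum_add_distrib, smul_smul]
  cases n with
  | zero => simp [Nat.sum_antidiagonal_succ, comulCoeff_succ_zero, add_comm]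
  | succ m =>
    rw [Nat.sum_antidiagonal_succ' (n := m), Nat.sum_antidiagonal_succ (n := m),
      Nat.sum_antidiagonal_succ (n := m + 1), Nat.sum_antidiagonal_succ' (n := m)]
    simp only [comulCoeff_succ_zero, comulCoeff_succ_succ, comulCoeff_zero_left, add_smul,
      sum_add_distrib, mul_comm (comulCoeff q t _ _)]
    module

section Algebra

variable {A : Type*} [Ring A] [Algebra k A]

lemma units_mul_mul_inv_eq_smul_iff {u : Aˣ} {w : A} {c : k} :
    ↑u * w * ↑u⁻¹ = c • w ↔ ↑u * w = c • (w * ↑u) := by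
  rw [Units.mul_inv_eq_iff_eq_mul, smul_mul_assoc]

lemma pow_mul_eq_smul_mul_pow {u v : A} {c : k} (h : u * v = c • (v * u)) :
    ∀ n : ℕ, u ^ n * v = c ^ n • (v * u ^ n)
  | 0 => by simp
  | n + 1 => by
      rw [pow_succ, mul_assoc, h, mul_smul_comm, ← mul_assoc, pow_mul_eq_smul_mul_pow h n,
        smul_mul_assoc, smul_smul, ← pow_succ', mul_assoc, ← pow_succ]

lemma mul_pow_eq_smul_pow_mul {u v : A} {c : k} (h : u * v = c • (v * u)) :
    ∀ n : ℕ, u * v ^ n = c ^ n • (v ^ n * u)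
  | 0 => by simp
  | n + 1 => by
      rw [pow_succ, ← mul_assoc, mul_pow_eq_smul_pow_mul h n, smul_mul_assoc, mul_assoc, h,
        mul_smul_comm, smul_smul, ← mul_assoc, ← pow_succ, pow_succ']

lemma mul_sub_smul_mul_eq_smul {a x w : A} {q c : k} (hax : a * x = q • (x * a))
    (haw : a * w = c • (w * a)) (d : k) :
    a * (x * w - d • (w * x)) = (q * c) • ((x * w - d • (w * x)) * a) := by
  simp only [mul_sub, sub_mul, mul_smul_comm, smul_mul_assoc, ← mul_assoc, hax, haw]
  simp only [mul_assoc, hax, haw, mul_smul_comm]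
  module

lemma skewCommutator_monomial_tmul {a b x : A} {q β : k} (hax : a * x = q • (x * a))
    (hbx : b * x = β • (x * b)) (hab : a * b = b * a) (i j : ℕ) (d : k) (w : A) :
    (x ⊗ₜ[k] 1 + a ⊗ₜ[k] x) * ((x ^ i * a ^ j * b) ⊗ₜ[k] w) -
        (q ^ i * d) • (((x ^ i * a ^ j * b) ⊗ₜ[k] w) * (x ⊗ₜ[k] 1 + a ⊗ₜ[k] x)) =
      (1 - q ^ (i + j) * d * β) • ((x ^ (i + 1) * a ^ j * b) ⊗ₜ[k] w) +
        q ^ i • ((x ^ i * a ^ (j + 1) * b) ⊗ₜ[k] (x * w - d • (w * x))) := by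
  have hx_mul : x * (x ^ i * a ^ j * b) = x ^ (i + 1) * a ^ j * b := by
    rw [← mul_assoc, ← mul_assoc, ← pow_succ']
  have hmul_x : x ^ i * a ^ j * b * x = (q ^ j * β) • (x ^ (i + 1) * a ^ j * b) := by
    rw [mul_assoc, hbx, mul_smul_comm, ← mul_assoc, mul_assoc (x ^ i),
      pow_mul_eq_smul_mul_pow hax, mul_smul_comm, smul_mul_assoc, smul_smul, ← mul_assoc,
      ← pow_succ, mul_comm β]
  have ha_mul : a * (x ^ i * a ^ j * b) = q ^ i • (x ^ i * a ^ (j + 1) * b) := by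
    rw [← mul_assoc, ← mul_assoc, mul_pow_eq_smul_pow_mul hax, smul_mul_assoc, smul_mul_assoc,
      mul_assoc (x ^ i), ← pow_succ']
  have hmul_a : x ^ i * a ^ j * b * a = x ^ i * a ^ (j + 1) * b := by
    rw [mul_assoc, ← hab, ← mul_assoc, mul_assoc (x ^ i), ← pow_succ]
  simp only [mul_add, add_mul, Algebra.TensorProduct.tmul_mul_tmul, one_mul, mul_one, hx_mul,
    hmul_x, ha_mul, hmul_a, ← smul_tmul', tmul_sub, tmul_smul]
  module

end Algebra

theorem comul_eq_sum_antidiagonal {A : Type*} [Ring A] [Bialgebra k A] {a b x : A}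
    {z : ℕ → A} {q α β : k}
    (hx : comul (R := k) x = x ⊗ₜ 1 + a ⊗ₜ x)
    (hz₀ : comul (R := k) (z 0) = z 0 ⊗ₜ 1 + b ⊗ₜ z 0)
    (hz : ∀ n, z (n + 1) = x * z n - (q ^ n * α) • (z n * x))
    (haz : ∀ n, a * z n = (q ^ n * α) • (z n * a))
    (hax : a * x = q • (x * a)) (hbx : b * x = β • (x * b)) (hab : a * b = b * a) (n : ℕ) :
    comul (R := k) (z n) = z n ⊗ₜ 1 +
      ∑ p ∈ antidiagonal n, comulCoeff q (α * β) p.1 p.2 • ((x ^ p.1 * a ^ p.2 * b) ⊗ₜ z p.2) := by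
  induction n with
  | zero => simp [hz₀]
  | succ n ih =>
    set c := q ^ n * α
    have hcomul : comul (R := k) (z (n + 1)) =
        comul x * comul (z n) - c • (comul (z n) * comul (R := k) x) := by
      rw [hz, map_sub, map_smul, Bialgebra.comul_mul, Bialgebra.comul_mul]
    have hleft : (x ⊗ₜ[k] 1 + a ⊗ₜ[k] x) * (z n ⊗ₜ 1) -
        c • ((z n ⊗ₜ 1) * (x ⊗ₜ[k] 1 + a ⊗ₜ[k] x)) = z (n + 1) ⊗ₜ 1 := by
      simp only [mul_add, add_mul, Algebra.TensorProduct.tmul_mul_tmul, one_mul, mul_one, haz n,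
        hz n, ← smul_tmul', sub_tmul]
      module
    have hterm : ∀ p ∈ antidiagonal n,
        (x ⊗ₜ[k] 1 + a ⊗ₜ[k] x) *
            (comulCoeff q (α * β) p.1 p.2 • ((x ^ p.1 * a ^ p.2 * b) ⊗ₜ z p.2)) -
          c • ((comulCoeff q (α * β) p.1 p.2 • ((x ^ p.1 * a ^ p.2 * b) ⊗ₜ z p.2)) *
            (x ⊗ₜ[k] 1 + a ⊗ₜ[k] x)) =
        comulCoeff q (α * β) p.1 p.2 • ((1 - q ^ (p.1 + 2 * p.2) * (α * β)) •
          ((x ^ (p.1 + 1) * a ^ p.2 * b) ⊗ₜ z p.2) +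
            q ^ p.1 • ((x ^ p.1 * a ^ (p.2 + 1) * b) ⊗ₜ z (p.2 + 1))) := by
      rintro ⟨i, j⟩ hij
      have hc : c = q ^ i * (q ^ j * α) := by
        rw [HasAntidiagonal.mem_antidiagonal] at hij
        simp only [c, ← hij, pow_add, mul_assoc]
      rw [mul_smul_comm, smul_mul_assoc, smul_comm c, ← smul_sub, hc,
        skewCommutator_monomial_tmul hax hbx hab, ← hz]
      congr 3
      ring
    have hsum := sum_antidiagonal_comulCoeff_smul q (α * β)
      (fun i j ↦ (x ^ i * a ^ j * b) ⊗ₜ[k] z j) n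
    rw [hcomul, hx, ih, ← hsum, ← sum_congr rfl hterm, sum_sub_distrib,
      ← smul_sum, ← sum_mul, ← mul_sum, ← hleft]
    simp only [mul_add, add_mul, smul_add]
    abel

end SkewPrimitive

open SkewPrimitive

theorem ad_pow_skew_primitive_general {k A : Type*} [Field k]
    [Ring A] [HopfAlgebra k A]
    (G : Subgroup Aˣ)
    (a b : G) (hab : a * b = b * a) (x y : A)
    (hx : Coalgebra.comul (R := k) x = x ⊗ₜ[k] 1 + ((a : Aˣ) : A) ⊗ₜ[k] x)
    (hy : Coalgebra.comul (R := k) y = y ⊗ₜ[k] 1 + ((b : Aˣ) : A) ⊗ₜ[k] y)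
    (χ μ : G →* kˣ)
    (hχ : ∀ g : G, ((g : Aˣ) : A) * x * ((g⁻¹ : G) : Aˣ) = ((χ g : kˣ) : k) • x)
    (hμ : ∀ g : G, ((g : Aˣ) : A) * y * ((g⁻¹ : G) : Aˣ) = ((μ g : kˣ) : k) • y)
    (r : ℕ) (hr : χ b * μ a = χ a ^ (1 - (r : ℤ))) :
    Coalgebra.comul (R := k)
        ((fun w => x * w - ((a : Aˣ) : A) * w * (((a⁻¹ : G) : Aˣ) : A) * x)^[r] y) =
      ((fun w => x * w - ((a : Aˣ) : A) * w * (((a⁻¹ : G) : Aˣ) : A) * x)^[r] y) ⊗ₜ[k] 1 +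
        (((a : Aˣ) : A) ^ r * ((b : Aˣ) : A)) ⊗ₜ[k]
          ((fun w => x * w - ((a : Aˣ) : A) * w * (((a⁻¹ : G) : Aˣ) : A) * x)^[r] y) := by
  set z : ℕ → A := fun n ↦
    (fun w => x * w - ((a : Aˣ) : A) * w * (((a⁻¹ : G) : Aˣ) : A) * x)^[n] y
  set q : k := ((χ a : kˣ) : k)
  set α : k := ((μ a : kˣ) : k)
  have hax := units_mul_mul_inv_eq_smul_iff.1 (hχ a)
  have hbx := units_mul_mul_inv_eq_smul_iff.1 (hχ b)
  have hab' : ((a : Aˣ) : A) * ((b : Aˣ) : A) = ((b : Aˣ) : A) * ((a : Aˣ) : A) := by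
    simpa using congrArg (fun g : G ↦ ((g : Aˣ) : A)) hab
  have hz (n : ℕ) (haz : ((a : Aˣ) : A) * z n = (q ^ n * α) • (z n * ((a : Aˣ) : A))) :
      z (n + 1) = x * z n - (q ^ n * α) • (z n * x) := by
    rw [← smul_mul_assoc, ← units_mul_mul_inv_eq_smul_iff.2 haz]
    exact Function.iterate_succ_apply' _ n y
  have haz (n : ℕ) : ((a : Aˣ) : A) * z n = (q ^ n * α) • (z n * ((a : Aˣ) : A)) := by
    induction n with
    | zero => rw [pow_zero, one_mul]; exact units_mul_mul_inv_eq_smul_iff.1 (hμ a)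
    | succ n ih => rw [hz n ih, mul_sub_smul_mul_eq_smul hax ih, ← mul_assoc, ← pow_succ']
  have hvanish (i j : ℕ) (hij : i + 1 + j = r) : q ^ (i + j) * (α * ((χ b : kˣ) : k)) = 1 := by
    have : χ a ^ (i + j) * (μ a * χ b) = 1 := by
      rw [mul_comm (μ a), hr, ← zpow_natCast, ← zpow_add, ← hij, ← zpow_zero (χ a)]
      congr 1
      push_cast
      ring
    simpa using congrArg Units.val this
  show Coalgebra.comul (R := k) (z r) =
    z r ⊗ₜ[k] 1 + (((a : Aˣ) : A) ^ r * ((b : Aˣ) : A)) ⊗ₜ[k] z r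
  rw [comul_eq_sum_antidiagonal hx hy (fun n ↦ hz n (haz n)) haz hax hbx hab' r,
    sum_eq_single_of_mem (0, r) (by simp)]
  · simp
  · rintro ⟨_ | i, j⟩ hij hne
    · simp_all
    · rw [HasAntidiagonal.mem_antidiagonal] at hij
      rw [comulCoeff_eq_zero (hvanish i j hij), zero_smul]

/-- Let `A` be a Hopf algebra over a field of characteristic zero, `a, b` commuting grouplike
elements lying in a group `G` of grouplikes, `x, y ∈ A` with `Δ(x) = x⊗1 + a⊗x`,
`Δ(y) = y⊗1 + b⊗y`, and `g x g⁻¹ = χ(g) x`, `g y g⁻¹ = μ(g) y` for characters `χ, μ` of `G`.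
If `χ(b) μ(a) = χ(a)^{1-r}` for some `r ≥ 0`, then `z = ad(x)^r(y)` is skew primitive:
`Δ(z) = z ⊗ 1 + aʳ b ⊗ z`, where `ad(x)(w) = x w - a w a⁻¹ x`. -/
theorem ad_pow_skew_primitive {k A : Type*} [Field k] [CharZero k]
    [Ring A] [HopfAlgebra k A]
    (G : Subgroup Aˣ)
    (hG : ∀ g : G, Coalgebra.comul (R := k) ((g : Aˣ) : A) =
      ((g : Aˣ) : A) ⊗ₜ[k] ((g : Aˣ) : A))
    (hGε : ∀ g : G, Coalgebra.counit (R := k) ((g : Aˣ) : A) = 1)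
    (a b : G) (hab : a * b = b * a) (x y : A)
    (hx : Coalgebra.comul (R := k) x = x ⊗ₜ[k] 1 + ((a : Aˣ) : A) ⊗ₜ[k] x)
    (hy : Coalgebra.comul (R := k) y = y ⊗ₜ[k] 1 + ((b : Aˣ) : A) ⊗ₜ[k] y)
    (χ μ : G →* kˣ)
    (hχ : ∀ g : G, ((g : Aˣ) : A) * x * ((g⁻¹ : G) : Aˣ) = ((χ g : kˣ) : k) • x)
    (hμ : ∀ g : G, ((g : Aˣ) : A) * y * ((g⁻¹ : G) : Aˣ) = ((μ g : kˣ) : k) • y)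
    (r : ℕ) (hr : χ b * μ a = χ a ^ (1 - (r : ℤ))) :
    Coalgebra.comul (R := k)
        ((fun w => x * w - ((a : Aˣ) : A) * w * (((a⁻¹ : G) : Aˣ) : A) * x)^[r] y) =
      ((fun w => x * w - ((a : Aˣ) : A) * w * (((a⁻¹ : G) : Aˣ) : A) * x)^[r] y) ⊗ₜ[k] 1 +
        (((a : Aˣ) : A) ^ r * ((b : Aˣ) : A)) ⊗ₜ[k]
          ((fun w => x * w - ((a : Aˣ) : A) * w * (((a⁻¹ : G) : Aˣ) : A) * x)^[r] y) :=
  ad_pow_skew_primitive_general G a b hab x y hx hy χ μ hχ hμ r hr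
end

section
/- In the setting of a Hopf algebra projection (p: A → H, j: H → A, p∘j = id_H, R = A^{co H}), for every r ∈ R and h ∈ H, the element S^{-1}(j(h_2)) r j(h_1) (summation of Sweedler notation) lies in R. -/
/-!
Write `ρ = (id ⊗ p) ∘ Δ : A → A ⊗ H`, an algebra map whose coinvariants form `R`. Since `S⁻¹` is
an anti-coalgebra map, `j` a coalgebra map and `p ∘ j = id`, for `r ∈ R`
`ρ (S⁻¹(j h₂) r j h₁) = ∑ S⁻¹(j h₄) r j h₁ ⊗ p(S⁻¹(j h₃)) h₂`,
and the middle factor collapses: `∑ p(S⁻¹(j h₃)) h₂ = p(∑ S⁻¹(j h₃) j h₂) = ε(h₂) 1`.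
-/

open TensorProduct Coalgebra HopfAlgebra

theorem map_comul_comul_comp_comul {R C : Type*} [CommSemiring R] [AddCommMonoid C]
    [Module R C] [Coalgebra R C] :
    map comul comul ∘ₗ (comul (R := R) (A := C)) =
      (TensorProduct.assoc R C C (C ⊗[R] C)).symm.toLinearMap ∘ₗ
        (TensorProduct.assoc R C C C).toLinearMap.lTensor C ∘ₗ
        ((comul (R := R) (A := C)).rTensor C).lTensor C ∘ₗ (comul (R := R) (A := C)).lTensor C ∘ₗ
        comul := by
  simp only [coassoc_simps]

namespace HopfAlgebra

variable {R A : Type*} [CommSemiring R] [Semiring A] [HopfAlgebra R A]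

/- `Δ ∘ S` is a right convolution inverse of `Δ` (`LinearMap.comul_right_inv`), and
`(S ⊗ S) ∘ τ ∘ Δ` is a left one: `∑ S c₂ c₃ ⊗ S c₁ c₄ = 1 ⊗ ∑ S c₁ c₂ = ε c (1 ⊗ 1)`. -/
theorem comul_comp_antipode :
    comul ∘ₗ antipode R (A := A) =
      map (antipode R) (antipode R) ∘ₗ (TensorProduct.comm R A A).toLinearMap ∘ₗ comul := by
  refine (WithConv.toConv_injective
    (left_inv_eq_right_inv ?_ LinearMap.comul_right_inv)).symm
  rw [LinearMap.convMul_def, LinearMap.convOne_def]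
  congr 1
  let P : A ⊗[R] (A ⊗[R] A) →ₗ[R] A ⊗[R] A := (LinearMap.mul' R A).lTensor A ∘ₗ
    (TensorProduct.leftComm R A A A).toLinearMap ∘ₗ (antipode R (A := A)).rTensor (A ⊗[R] A)
  calc LinearMap.mul' R (A ⊗[R] A) ∘ₗ map (map (antipode R) (antipode R) ∘ₗ
          (TensorProduct.comm R A A).toLinearMap ∘ₗ comul) comul ∘ₗ comul
      = P ∘ₗ ((LinearMap.mul' R A ∘ₗ (antipode R (A := A)).rTensor A ∘ₗ comul).rTensor A).lTensor A
          ∘ₗ (comul (R := R) (A := A)).lTensor A ∘ₗ comul := by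
        rw [LinearMap.mul'_tensor]
        simp only [P, coassoc_simps]
    _ = Algebra.linearMap R (A ⊗[R] A) ∘ₗ counit := by
        rw [mul_antipode_rTensor_comul]
        ext c
        simp [P, ← (ℛ R c).eq, map_sum, LinearMap.rTensor_comp_apply, ← tmul_sum,
          sum_antipode_mul_eq_algebraMap_counit, Algebra.algebraMap_eq_smul_one,
          Algebra.TensorProduct.one_def]

variable {Sinv : A →ₗ[R] A}

theorem comul_comp_Sinv (hS1 : ∀ a, Sinv (antipode R a) = a)
    (hS2 : ∀ a, antipode R (Sinv a) = a) :
    comul ∘ₗ Sinv = map Sinv Sinv ∘ₗ (TensorProduct.comm R A A).toLinearMap ∘ₗ comul := by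
  ext a
  have h := LinearMap.congr_fun (comul_comp_antipode (R := R)) (Sinv a)
  simp only [LinearMap.comp_apply, hS2, LinearEquiv.coe_coe] at h ⊢
  rw [h]
  clear h
  induction comul (R := R) (Sinv a) using TensorProduct.induction_on with
  | zero => simp only [map_zero]
  | tmul x y => simp only [TensorProduct.comm_tmul, map_tmul, hS1]
  | add x y hx hy => rw [map_add, map_add, map_add, map_add, ← hx, ← hy]

theorem sum_Sinv_mul_eq_algebraMap_counit (hS1 : ∀ a, Sinv (antipode R a) = a)
    (hS2 : ∀ a, antipode R (Sinv a) = a) {a : A} {ι : Type*} (𝓡 : Repr R a ι) :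
    ∑ i ∈ 𝓡.index, Sinv (𝓡.right i) * 𝓡.left i = algebraMap R A (counit a) := by
  apply Function.LeftInverse.injective hS1
  simp [map_sum, antipode_mul_antidistrib, hS2, sum_antipode_mul_eq_algebraMap_counit,
    Algebra.algebraMap_eq_smul_one]

end HopfAlgebra

section Sandwich

variable {R V B B' : Type*} [CommSemiring R] [AddCommMonoid V] [Module R V]
  [Semiring B] [Algebra R B] [Semiring B'] [Algebra R B']

noncomputable def sandwich (z : B) (f g : V →ₗ[R] B) : V ⊗[R] V →ₗ[R] B :=
  LinearMap.mul' R B ∘ₗ map f (LinearMap.mulLeft R z ∘ₗ g) ∘ₗ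
    (TensorProduct.comm R V V).toLinearMap

@[simp]
theorem sandwich_tmul (z : B) (f g : V →ₗ[R] B) (a b : V) :
    sandwich z f g (a ⊗ₜ b) = f b * z * g a := by
  simp [sandwich, mul_assoc]

theorem AlgHom.comp_sandwich (φ : B →ₐ[R] B') (z : B) (f g : V →ₗ[R] B) :
    φ.toLinearMap ∘ₗ sandwich z f g = sandwich (φ z) (φ.toLinearMap ∘ₗ f) (φ.toLinearMap ∘ₗ g) := by
  ext a b
  simp

theorem sandwich_comp_map {W : Type*} [AddCommMonoid W] [Module R W] (z : B)
    (f g : V →ₗ[R] B) (u : W →ₗ[R] V) :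
    sandwich z (f ∘ₗ u) (g ∘ₗ u) = sandwich z f g ∘ₗ map u u := by
  ext a b
  simp

end Sandwich

section HopfProjection

variable {R A H : Type*} [CommSemiring R] [Semiring A] [HopfAlgebra R A] [Semiring H]
  [Bialgebra R H]

/-- `(id ⊗ p) ∘ Δ`, whose coinvariants form `R`. -/
noncomputable def coaction (p : A →ₐc[R] H) : A →ₐ[R] A ⊗[R] H :=
  (Algebra.TensorProduct.map (AlgHom.id R A) (p : A →ₐ[R] H)).comp (Bialgebra.comulAlgHom R A)

theorem coaction_apply (p : A →ₐc[R] H) (a : A) :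
    coaction p a = map LinearMap.id (p : A →ₗ[R] H) (comul a) := rfl

variable {p : A →ₐc[R] H} {j : H →ₐc[R] A} {Sinv : A →ₗ[R] A}

theorem coaction_comp_section (hpj : ∀ h, p (j h) = h) :
    (coaction p).toLinearMap ∘ₗ (j : H →ₗ[R] A) = map (j : H →ₗ[R] A) LinearMap.id ∘ₗ comul := by
  have hpj' : (p : A →ₗ[R] H) ∘ₗ (j : H →ₗ[R] A) = LinearMap.id := LinearMap.ext hpj
  change map LinearMap.id (p : A →ₗ[R] H) ∘ₗ comul ∘ₗ (j : H →ₗ[R] A) = _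
  rw [← CoalgHomClass.map_comp_comul, ← LinearMap.comp_assoc, ← map_comp, hpj',
    LinearMap.id_comp]

theorem coaction_comp_Sinv_comp_section (hS1 : ∀ a, Sinv (antipode R a) = a)
    (hS2 : ∀ a, antipode R (Sinv a) = a) :
    (coaction p).toLinearMap ∘ₗ Sinv ∘ₗ (j : H →ₗ[R] A) =
      map (Sinv ∘ₗ (j : H →ₗ[R] A)) ((p : A →ₗ[R] H) ∘ₗ Sinv ∘ₗ (j : H →ₗ[R] A)) ∘ₗ
        (TensorProduct.comm R H H).toLinearMap ∘ₗ comul := by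
  change map LinearMap.id (p : A →ₗ[R] H) ∘ₗ comul ∘ₗ Sinv ∘ₗ (j : H →ₗ[R] A) = _
  rw [← LinearMap.comp_assoc (j : H →ₗ[R] A) Sinv comul, comul_comp_Sinv hS1 hS2]
  simp only [coassoc_simps, ← CoalgHomClass.map_comp_comul]

theorem sum_map_Sinv_mul_eq_algebraMap_counit (hpj : ∀ h, p (j h) = h)
    (hS1 : ∀ a, Sinv (antipode R a) = a) (hS2 : ∀ a, antipode R (Sinv a) = a)
    {c : H} {ι : Type*} (𝓡 : Repr R c ι) :
    ∑ i ∈ 𝓡.index, p (Sinv (j (𝓡.right i))) * 𝓡.left i = algebraMap R H (counit c) := by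
  have key := sum_Sinv_mul_eq_algebraMap_counit hS1 hS2 (𝓡.induced j)
  simp only [Repr.induced_index, Repr.induced_left, Repr.induced_right, Function.comp_apply,
    CoalgHomClass.counit_comp_apply] at key
  rw [← AlgHomClass.commutes p, ← key]
  simp [map_sum, hpj]

theorem coaction_comp_sandwich_comp_comul (hpj : ∀ h, p (j h) = h)
    (hS1 : ∀ a, Sinv (antipode R a) = a) (hS2 : ∀ a, antipode R (Sinv a) = a) {r : A}
    (hr : coaction p r = r ⊗ₜ 1) :
    (coaction p).toLinearMap ∘ₗ sandwich r (Sinv ∘ₗ (j : H →ₗ[R] A)) j ∘ₗ comul =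
      sandwich (r ⊗ₜ[R] (1 : H))
        (map (Sinv ∘ₗ (j : H →ₗ[R] A)) ((p : A →ₗ[R] H) ∘ₗ Sinv ∘ₗ (j : H →ₗ[R] A)) ∘ₗ
          (TensorProduct.comm R H H).toLinearMap)
        (map (j : H →ₗ[R] A) LinearMap.id) ∘ₗ map comul comul ∘ₗ comul := by
  rw [← LinearMap.comp_assoc, AlgHom.comp_sandwich, hr, coaction_comp_Sinv_comp_section hS1 hS2,
    coaction_comp_section hpj, ← LinearMap.comp_assoc comul, sandwich_comp_map]
  rfl

theorem coaction_sandwich_comul_eq_tmul_one (hpj : ∀ h, p (j h) = h)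
    (hS1 : ∀ a, Sinv (antipode R a) = a) (hS2 : ∀ a, antipode R (Sinv a) = a) {r : A}
    (hr : coaction p r = r ⊗ₜ 1) (h : H) :
    coaction p (sandwich r (Sinv ∘ₗ (j : H →ₗ[R] A)) j (comul h)) =
      sandwich r (Sinv ∘ₗ (j : H →ₗ[R] A)) j (comul h) ⊗ₜ 1 := by
  set M := sandwich r (Sinv ∘ₗ (j : H →ₗ[R] A)) j
  let N := (TensorProduct.mk R A H).flip 1 ∘ₗ M
  let T := sandwich (r ⊗ₜ[R] (1 : H))
    (map (Sinv ∘ₗ (j : H →ₗ[R] A)) ((p : A →ₗ[R] H) ∘ₗ Sinv ∘ₗ (j : H →ₗ[R] A)) ∘ₗ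
      (TensorProduct.comm R H H).toLinearMap) (map (j : H →ₗ[R] A) LinearMap.id)
  let Q : H ⊗[R] (H ⊗[R] H) →ₗ[R] (H ⊗[R] H) ⊗[R] (H ⊗[R] H) :=
    (TensorProduct.assoc R H H (H ⊗[R] H)).symm.toLinearMap ∘ₗ
      (TensorProduct.assoc R H H H).toLinearMap.lTensor H ∘ₗ
      ((comul (R := R) (A := H)).rTensor H).lTensor H
  suffices (coaction p).toLinearMap ∘ₗ M ∘ₗ comul = N ∘ₗ comul from LinearMap.congr_fun this h
  -- On `a ⊗ (m ⊗ b)`, the middle factor `m` is absorbed through `∑ p (S⁻¹ (j m₂)) m₁ = ε m`.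
  have hcollapse : T ∘ₗ Q = N ∘ₗ
      ((TensorProduct.lid R H).toLinearMap ∘ₗ (counit (R := R) (A := H)).rTensor H).lTensor H := by
    ext a m b
    have key (x : A) : ∑ i ∈ (ℛ R m).index,
        x ⊗ₜ[R] (p (Sinv (j ((ℛ R m).right i))) * (ℛ R m).left i) =
          counit (R := R) m • (x ⊗ₜ[R] (1 : H)) := by
      rw [← tmul_sum, sum_map_Sinv_mul_eq_algebraMap_counit hpj hS1 hS2,
        Algebra.algebraMap_eq_smul_one, tmul_smul]
    simp [T, Q, N, M, ← (ℛ R m).eq, map_sum, sum_tmul, tmul_sum, key]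
  have hlid : (TensorProduct.lid R H).toLinearMap ∘ₗ TensorProduct.mk R R H 1 = LinearMap.id := by
    ext; simp
  calc (coaction p).toLinearMap ∘ₗ M ∘ₗ comul
      = T ∘ₗ Q ∘ₗ (comul (R := R) (A := H)).lTensor H ∘ₗ comul := by
        rw [coaction_comp_sandwich_comp_comul hpj hS1 hS2 hr, map_comul_comul_comp_comul]
        rfl
    _ = N ∘ₗ ((TensorProduct.lid R H).toLinearMap ∘ₗ (counit (R := R) (A := H)).rTensor H ∘ₗ
          comul).lTensor H ∘ₗ comul := by
        rw [← LinearMap.comp_assoc, hcollapse, LinearMap.comp_assoc, ← LinearMap.comp_assoc comul,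
          ← LinearMap.lTensor_comp]
        rfl
    _ = N ∘ₗ comul := by
        rw [rTensor_counit_comp_comul, hlid, LinearMap.lTensor_id, LinearMap.id_comp]

end HopfProjection

theorem conj_coinvariant_mem_general {k A H : Type*} [Field k]
    [Ring A] [HopfAlgebra k A] [Ring H] [HopfAlgebra k H]
    (p : A →ₐc[k] H) (j : H →ₐc[k] A) (hpj : ∀ h, p (j h) = h)
    (Sinv : A →ₗ[k] A)
    (hS1 : ∀ a : A, Sinv (HopfAlgebra.antipode (R := k) a) = a)
    (hS2 : ∀ a : A, HopfAlgebra.antipode (R := k) (Sinv a) = a)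
    (r : A)
    (hr : TensorProduct.map (LinearMap.id : A →ₗ[k] A) (p : A →ₗ[k] H)
        (Coalgebra.comul (R := k) r) = r ⊗ₜ[k] 1)
    (h : H) {ι : Type*} (s : Finset ι) (h₁ h₂ : ι → H)
    (hrep : Coalgebra.comul (R := k) h = ∑ i ∈ s, h₁ i ⊗ₜ[k] h₂ i) :
    TensorProduct.map (LinearMap.id : A →ₗ[k] A) (p : A →ₗ[k] H)
        (Coalgebra.comul (R := k) (∑ i ∈ s, Sinv (j (h₂ i)) * r * j (h₁ i))) =
      (∑ i ∈ s, Sinv (j (h₂ i)) * r * j (h₁ i)) ⊗ₜ[k] 1 := by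
  have hsum : ∑ i ∈ s, Sinv (j (h₂ i)) * r * j (h₁ i) =
      sandwich r (Sinv ∘ₗ (j : H →ₗ[k] A)) j (comul h) := by
    simp [hrep, map_sum]
  rw [hsum, ← coaction_apply]
  exact coaction_sandwich_comul_eq_tmul_one hpj hS1 hS2 ((coaction_apply p r).trans hr) h

/-- In the setting of a Hopf algebra projection `p : A → H`, `j : H → A`, `p ∘ j = id_H`,
with coinvariants `R = A^{co H}` and bijective antipode `S` (with inverse `S⁻¹`):
for every `r ∈ R` and `h ∈ H`, the element `S⁻¹(j(h₂)) r j(h₁)` (Sweedler notation,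
expressed via any finite representation `Δ(h) = ∑ᵢ h₁ᵢ ⊗ h₂ᵢ`) again lies in `R`. -/
theorem conj_coinvariant_mem {k A H : Type*} [Field k]
    [Ring A] [HopfAlgebra k A] [FiniteDimensional k A] [Ring H] [HopfAlgebra k H]
    (p : A →ₐc[k] H) (j : H →ₐc[k] A) (hpj : ∀ h, p (j h) = h)
    (Sinv : A →ₗ[k] A)
    (hS1 : ∀ a : A, Sinv (HopfAlgebra.antipode (R := k) a) = a)
    (hS2 : ∀ a : A, HopfAlgebra.antipode (R := k) (Sinv a) = a)
    (r : A)
    (hr : TensorProduct.map (LinearMap.id : A →ₗ[k] A) (p : A →ₗ[k] H)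
        (Coalgebra.comul (R := k) r) = r ⊗ₜ[k] 1)
    (h : H) {ι : Type*} (s : Finset ι) (h₁ h₂ : ι → H)
    (hrep : Coalgebra.comul (R := k) h = ∑ i ∈ s, h₁ i ⊗ₜ[k] h₂ i) :
    TensorProduct.map (LinearMap.id : A →ₗ[k] A) (p : A →ₗ[k] H)
        (Coalgebra.comul (R := k) (∑ i ∈ s, Sinv (j (h₂ i)) * r * j (h₁ i))) =
      (∑ i ∈ s, Sinv (j (h₂ i)) * r * j (h₁ i)) ⊗ₜ[k] 1 :=
  conj_coinvariant_mem_general p j hpj Sinv hS1 hS2 r hr h s h₁ h₂ hrep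
end

section
/- Let A be a finite dimensional Hopf algebra with a Hopf algebra projection onto H (maps p, j as above, R = A^{co H}), and let H act on A by h·x := j(h_1) x j(S h_2). If x ∈ R is a left integral of R (meaning r x = ε(r)x for all r ∈ R, computed in A) and Λ is a left integral of H, then the element Λx := (Λ_1 · x) j(Λ_2) is a left integral of A, i.e., a(Λx) = ε(a)(Λx) for all a ∈ A. -/
open TensorProduct Coalgebra LinearMap

namespace SmashAux

variable {k : Type*} [CommSemiring k]

section Conv

variable {C M : Type*} [AddCommMonoid C] [Module k C] [Coalgebra k C]
  [Semiring M] [Algebra k M]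

/-- Convolution product on `Hom(C, M)`. -/
noncomputable def conv (f g : C →ₗ[k] M) : C →ₗ[k] M :=
  LinearMap.mul' k M ∘ₗ TensorProduct.map f g ∘ₗ Coalgebra.comul

/-- Unit for convolution. -/
noncomputable def convOne : C →ₗ[k] M :=
  (Algebra.linearMap k M) ∘ₗ Coalgebra.counit

lemma convOne_apply (c : C) : (convOne (k := k) (M := M)) c = counit (R := k) c • 1 := by
  simp [convOne, Algebra.algebraMap_eq_smul_one]

lemma conv_repr (f g : C →ₗ[k] M) {c : C} {ι : Type*} (r : Coalgebra.Repr k c ι) :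
    conv f g c = ∑ i ∈ r.index, f (r.left i) * g (r.right i) := by
  simp only [conv, LinearMap.comp_apply, ← r.eq, map_sum, TensorProduct.map_tmul,
    LinearMap.mul'_apply]

lemma sum_counit_smul_right {c : C} {ι : Type*} (r : Coalgebra.Repr k c ι) :
    ∑ i ∈ r.index, counit (R := k) (r.left i) • r.right i = c := by
  have h := congrArg (TensorProduct.lid k C) (Coalgebra.sum_counit_tmul_eq r)
  simp only [map_sum, TensorProduct.lid_tmul, one_smul] at h
  exact h

lemma sum_counit_smul_left {c : C} {ι : Type*} (r : Coalgebra.Repr k c ι) :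
    ∑ i ∈ r.index, counit (R := k) (r.right i) • r.left i = c := by
  have h := congrArg (TensorProduct.rid k C) (Coalgebra.sum_tmul_counit_eq r)
  simp only [map_sum, TensorProduct.rid_tmul, one_smul] at h
  exact h

lemma conv_one_mul (f : C →ₗ[k] M) : conv convOne f = f := by
  refine LinearMap.ext fun c => ?_
  obtain r := Coalgebra.Repr.arbitrary k c
  rw [conv_repr _ _ r]
  calc ∑ i ∈ r.index, convOne (r.left i) * f (r.right i)
      = ∑ i ∈ r.index, f (counit (R := k) (r.left i) • r.right i) := by
        refine Finset.sum_congr rfl fun i _ => ?_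
        rw [convOne_apply, smul_mul_assoc, one_mul, map_smul]
    _ = f c := by rw [← map_sum, sum_counit_smul_right]

lemma conv_mul_one (f : C →ₗ[k] M) : conv f convOne = f := by
  refine LinearMap.ext fun c => ?_
  obtain r := Coalgebra.Repr.arbitrary k c
  rw [conv_repr _ _ r]
  calc ∑ i ∈ r.index, f (r.left i) * convOne (r.right i)
      = ∑ i ∈ r.index, f (counit (R := k) (r.right i) • r.left i) := by
        refine Finset.sum_congr rfl fun i _ => ?_
        rw [convOne_apply, mul_smul_comm, mul_one, map_smul]
    _ = f c := by rw [← map_sum, sum_counit_smul_left]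

lemma conv_assoc (f g h : C →ₗ[k] M) : conv (conv f g) h = conv f (conv g h) := by
  refine LinearMap.ext fun c => ?_
  set r := Coalgebra.Repr.arbitrary k c with hr
  set r1 : ∀ i : r.ι, Coalgebra.Repr k (r.left i) (C × C) := fun i => Coalgebra.Repr.arbitrary k _
  set r2 : ∀ i : r.ι, Coalgebra.Repr k (r.right i) (C × C) := fun i => Coalgebra.Repr.arbitrary k _
  have key := Coalgebra.sum_map_tmul_tmul_eq (R := k) f g h c (repr := r) (a₁ := r1) (a₂ := r2)
  have key2 := congrArg (LinearMap.mul' k M ∘ₗ LinearMap.lTensor M (LinearMap.mul' k M)) key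
  simp only [map_sum, LinearMap.comp_apply, LinearMap.lTensor_tmul, LinearMap.mul'_apply] at key2
  rw [conv_repr _ _ r, conv_repr _ _ r]
  calc ∑ i ∈ r.index, conv f g (r.left i) * h (r.right i)
      = ∑ i ∈ r.index, ∑ j' ∈ (r1 i).index,
          f ((r1 i).left j') * (g ((r1 i).right j') * h (r.right i)) := by
        refine Finset.sum_congr rfl fun i _ => ?_
        rw [conv_repr _ _ (r1 i), Finset.sum_mul]
        exact Finset.sum_congr rfl fun j' _ => mul_assoc _ _ _
    _ = ∑ i ∈ r.index, ∑ j' ∈ (r2 i).index,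
          f (r.left i) * (g ((r2 i).left j') * h ((r2 i).right j')) := key2.symm
    _ = ∑ i ∈ r.index, f (r.left i) * conv g h (r.right i) := by
        refine Finset.sum_congr rfl fun i _ => ?_
        rw [conv_repr _ _ (r2 i), Finset.mul_sum]

lemma conv_comp_algHom {M' : Type*} [Semiring M'] [Algebra k M'] (φ : M →ₐ[k] M')
    (f g : C →ₗ[k] M) :
    φ.toLinearMap ∘ₗ conv f g = conv (φ.toLinearMap ∘ₗ f) (φ.toLinearMap ∘ₗ g) := by
  refine LinearMap.ext fun c => ?_
  obtain r := Coalgebra.Repr.arbitrary k c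
  simp only [LinearMap.comp_apply, conv_repr _ _ r, map_sum]
  exact Finset.sum_congr rfl fun i _ => by
    simp only [AlgHom.toLinearMap_apply, map_mul]

lemma conv_mulRight (f g : C →ₗ[k] M) (z : M) :
    conv f (LinearMap.mulRight k z ∘ₗ g) = LinearMap.mulRight k z ∘ₗ conv f g := by
  refine LinearMap.ext fun c => ?_
  obtain r := Coalgebra.Repr.arbitrary k c
  simp only [LinearMap.comp_apply, conv_repr _ _ r, LinearMap.mulRight_apply,
    Finset.sum_mul, mul_assoc]

lemma conv_toSpan_counit (f : C →ₗ[k] M) (z : M) :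
    conv f (LinearMap.toSpanSingleton k M z ∘ₗ Coalgebra.counit) =
      LinearMap.mulRight k z ∘ₗ f := by
  refine LinearMap.ext fun c => ?_
  obtain r := Coalgebra.Repr.arbitrary k c
  simp only [LinearMap.comp_apply, conv_repr _ _ r, LinearMap.toSpanSingleton_apply,
    LinearMap.mulRight_apply]
  calc ∑ i ∈ r.index, f (r.left i) * counit (R := k) (r.right i) • z
      = (∑ i ∈ r.index, counit (R := k) (r.right i) • f (r.left i)) * z := by
        rw [Finset.sum_mul]
        exact Finset.sum_congr rfl fun i _ => by
          rw [mul_smul_comm, smul_mul_assoc]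
    _ = f c * z := by
        simp only [← map_smul, ← map_sum, sum_counit_smul_left]

/-- cancellation -/
lemma conv_right_cancel {u v w w' : C →ₗ[k] M} (hw : conv w w' = convOne)
    (huv : conv u w = conv v w) : u = v := by
  have hu : u = conv u (conv w w') := by rw [hw, conv_mul_one]
  have hv : v = conv v (conv w w') := by rw [hw, conv_mul_one]
  rw [hu, hv, ← conv_assoc, ← conv_assoc, huv]


lemma conv_mulLeft_left (f g : C →ₗ[k] M) (z : M) :
    conv (LinearMap.mulLeft k z ∘ₗ f) g = LinearMap.mulLeft k z ∘ₗ conv f g := by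
  refine LinearMap.ext fun c => ?_
  obtain r := Coalgebra.Repr.arbitrary k c
  simp only [LinearMap.comp_apply, conv_repr _ _ r, LinearMap.mulLeft_apply,
    Finset.mul_sum, mul_assoc]

lemma algHom_comp_convOne {M' : Type*} [Semiring M'] [Algebra k M'] (φ : M →ₐ[k] M') :
    φ.toLinearMap ∘ₗ (convOne (k := k) (C := C) (M := M)) = convOne := by
  refine LinearMap.ext fun c => ?_
  simp [convOne_apply]

end Conv



section Hopf
variable {B : Type*} [Semiring B] [HopfAlgebra k B]

lemma conv_id_antipode :
    conv (LinearMap.id : B →ₗ[k] B) (HopfAlgebra.antipode (R := k)) = convOne := by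
  refine LinearMap.ext fun c => ?_
  have h := HopfAlgebra.mul_antipode_lTensor_comul_apply (R := k) (A := B) c
  simpa [conv, convOne, LinearMap.lTensor] using h

lemma conv_antipode_id :
    conv (HopfAlgebra.antipode (R := k)) (LinearMap.id : B →ₗ[k] B) = convOne := by
  refine LinearMap.ext fun c => ?_
  have h := HopfAlgebra.mul_antipode_rTensor_comul_apply (R := k) (A := B) c
  simpa [conv, convOne, LinearMap.rTensor] using h

lemma counit_antipode (u : B) :
    Coalgebra.counit (R := k) (HopfAlgebra.antipode (R := k) u) = Coalgebra.counit (R := k) u := by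
  obtain r := Coalgebra.Repr.arbitrary k u
  have h1 := HopfAlgebra.sum_antipode_mul_eq_smul (R := k) r
  have h2 := congrArg (Coalgebra.counit (R := k)) h1
  simp only [map_sum, Bialgebra.counit_mul, map_smul, Bialgebra.counit_one, smul_eq_mul,
    mul_one] at h2
  calc Coalgebra.counit (R := k) (HopfAlgebra.antipode (R := k) u)
      = Coalgebra.counit (R := k) (HopfAlgebra.antipode (R := k)
          (∑ i ∈ r.index, Coalgebra.counit (R := k) (r.right i) • r.left i)) := by
        rw [sum_counit_smul_left]
    _ = ∑ i ∈ r.index, Coalgebra.counit (R := k)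
          (HopfAlgebra.antipode (R := k) (r.left i)) * Coalgebra.counit (R := k) (r.right i) := by
        rw [map_sum, map_sum]
        exact Finset.sum_congr rfl fun i _ => by
          rw [map_smul, map_smul, smul_eq_mul, mul_comm]
    _ = Coalgebra.counit (R := k) u := h2

end Hopf

section ReprMap
variable {C D : Type*} [AddCommMonoid C] [Module k C] [Coalgebra k C]
  [AddCommMonoid D] [Module k D] [Coalgebra k D]
  {F : Type*} [FunLike F C D] [CoalgHomClass F k C D]

/-- Transport of a Sweedler representation along a coalgebra morphism. -/
noncomputable def reprMap (f : F) {c : C} {ι : Type*} (r : Coalgebra.Repr k c ι) :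
    Coalgebra.Repr k (f c) ι where
  index := r.index
  left := fun i => f (r.left i)
  right := fun i => f (r.right i)
  eq := by
    rw [← CoalgHomClass.map_comp_comul_apply f c, ← r.eq, map_sum]
    simp [TensorProduct.map_tmul]

@[simp] lemma reprMap_index (f : F) {c : C} {ι : Type*} (r : Coalgebra.Repr k c ι) :
    (reprMap f r).index = r.index := rfl
@[simp] lemma reprMap_left (f : F) {c : C} {ι : Type*} (r : Coalgebra.Repr k c ι) (i) :
    (reprMap f r).left i = f (r.left i) := rfl
@[simp] lemma reprMap_right (f : F) {c : C} {ι : Type*} (r : Coalgebra.Repr k c ι) (i) :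
    (reprMap f r).right i = f (r.right i) := rfl

end ReprMap

section Lid
variable {V W : Type*} [AddCommMonoid V] [Module k V] [AddCommMonoid W] [Module k W]

lemma lid_map_mul_left {M : Type*} [Semiring M] [Algebra k M] (ψ : M →ₗ[k] k) (h : M)
    (Wn : M ⊗[k] M) :
    h * TensorProduct.lid k M (TensorProduct.map ψ LinearMap.id Wn) =
      TensorProduct.lid k M (TensorProduct.map ψ LinearMap.id ((1 ⊗ₜ[k] h) * Wn)) := by
  induction Wn using TensorProduct.induction_on with
  | zero => simp
  | tmul u v =>
      simp [Algebra.TensorProduct.tmul_mul_tmul, mul_smul_comm]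
  | add W₁ W₂ ih₁ ih₂ => simp [mul_add, ih₁, ih₂]

lemma lid_map_antipode_mul {M : Type*} [Semiring M] [Algebra k M] (ψ : M →ₗ[k] k) (z : M)
    (Wn : M ⊗[k] M) :
    TensorProduct.lid k M (TensorProduct.map ψ LinearMap.id ((z ⊗ₜ[k] 1) * Wn)) =
      TensorProduct.lid k M (TensorProduct.map (ψ ∘ₗ LinearMap.mulLeft k z) LinearMap.id Wn) := by
  induction Wn using TensorProduct.induction_on with
  | zero => simp
  | tmul u v => simp [Algebra.TensorProduct.tmul_mul_tmul]
  | add W₁ W₂ ih₁ ih₂ => simp [mul_add, ih₁, ih₂]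

lemma basis_expand {ι : Type*} [Fintype ι] (b : Module.Basis ι k V) (Wn : V ⊗[k] W) :
    ∑ i : ι, b i ⊗ₜ[k] (TensorProduct.lid k W (TensorProduct.map (b.coord i) LinearMap.id Wn))
      = Wn := by
  induction Wn using TensorProduct.induction_on with
  | zero => simp
  | tmul u v =>
      simp only [TensorProduct.map_tmul, LinearMap.id_coe, id_eq, TensorProduct.lid_tmul,
        Module.Basis.coord_apply]
      simp_rw [TensorProduct.tmul_smul, TensorProduct.smul_tmul', ← TensorProduct.sum_tmul,
        Module.Basis.sum_repr]
  | add W₁ W₂ ih₁ ih₂ =>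
      simp only [map_add, TensorProduct.tmul_add, Finset.sum_add_distrib, ih₁, ih₂]

end Lid

section Main

variable {k A H : Type*} [Field k]
  [Ring A] [HopfAlgebra k A] [Ring H] [HopfAlgebra k H]

local notation "𝒮" => HopfAlgebra.antipode (R := k) (A := H)
local notation "ε" => Coalgebra.counit (R := k)

variable (p : A →ₐc[k] H) (j : H →ₐc[k] A)

/-- `p` as a plain linear map. -/
noncomputable def pLin : A →ₗ[k] H := (p : A →ₗ[k] H)
/-- `j` as a plain linear map. -/
noncomputable def jLin : H →ₗ[k] A := (j : H →ₗ[k] A)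

@[simp] lemma pLin_apply (a : A) : pLin p a = p a := rfl
@[simp] lemma jLin_apply (h : H) : jLin j h = j h := rfl

/-- The right `H`-coaction `(id ⊗ p) ∘ Δ` on `A`. -/
noncomputable def rho : A →ₗ[k] A ⊗[k] H :=
  TensorProduct.map LinearMap.id (p : A →ₗ[k] H) ∘ₗ Coalgebra.comul

lemma rho_apply (a : A) :
    rho p a = TensorProduct.map LinearMap.id (p : A →ₗ[k] H) (Coalgebra.comul a) := rfl

lemma algTensorMap_eq (w : A ⊗[k] A) :
    Algebra.TensorProduct.map (AlgHom.id k A) (p : A →ₐ[k] H) w =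
      TensorProduct.map LinearMap.id (p : A →ₗ[k] H) w := by
  induction w using TensorProduct.induction_on with
  | zero => simp
  | tmul a b => simp [Algebra.TensorProduct.map_tmul]
  | add w₁ w₂ ih₁ ih₂ => simp [ih₁, ih₂]

/-- `rho` as an algebra homomorphism. -/
noncomputable def rhoAlg : A →ₐ[k] A ⊗[k] H :=
  (Algebra.TensorProduct.map (AlgHom.id k A) (p : A →ₐ[k] H)).comp (Bialgebra.comulAlgHom k A)

lemma rhoAlg_toLinearMap : (rhoAlg p).toLinearMap = rho p := by
  refine LinearMap.ext fun a => ?_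
  show Algebra.TensorProduct.map (AlgHom.id k A) (p : A →ₐ[k] H)
      ((Bialgebra.comulAlgHom k A) a) = _
  rw [Bialgebra.comulAlgHom_apply, algTensorMap_eq, rho_apply]

lemma rho_mul (a b : A) : rho p (a * b) = rho p a * rho p b := by
  rw [← rhoAlg_toLinearMap]; exact map_mul (rhoAlg p) a b

lemma rho_j_repr (hpj : ∀ h, p (j h) = h) (h : H) {ι : Type*} (r : Coalgebra.Repr k h ι) :
    rho p (j h) = ∑ i ∈ r.index, j (r.left i) ⊗ₜ[k] r.right i := by
  rw [rho_apply, ← CoalgHomClass.map_comp_comul_apply j h, ← r.eq, map_sum, map_sum]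
  exact Finset.sum_congr rfl fun i _ => by
    simp [TensorProduct.map_tmul, hpj]

/-- `j ∘ S` as a linear map. -/
noncomputable def jS : H →ₗ[k] A := jLin j ∘ₗ 𝒮
/-- `j ∘ S ∘ p` as a linear map. -/
noncomputable def jSp : A →ₗ[k] A := jS j ∘ₗ pLin p
/-- `j ∘ p` as a linear map. -/
noncomputable def jp : A →ₗ[k] A := jLin j ∘ₗ pLin p
/-- The canonical projection `Θ(a) = ∑ a₁ j(S(p a₂))` onto the coinvariants. -/
noncomputable def theta : A →ₗ[k] A := conv LinearMap.id (jSp p j)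

@[simp] lemma jS_apply (h : H) : jS j h = j (𝒮 h) := rfl
@[simp] lemma jSp_apply (a : A) : jSp p j a = j (𝒮 (p a)) := rfl
@[simp] lemma jp_apply (a : A) : jp p j a = j (p a) := rfl

/-- `a ↦ a ⊗ₜ 1` as a linear map. -/
noncomputable def iL : A →ₗ[k] A ⊗[k] H :=
  (Algebra.TensorProduct.includeLeft (R := k) (A := A) (B := H) : A →ₐ[k] A ⊗[k] H).toLinearMap
/-- `h ↦ 1 ⊗ₜ h` as a linear map. -/
noncomputable def iR : H →ₗ[k] A ⊗[k] H :=
  (Algebra.TensorProduct.includeRight (R := k) (A := A) (B := H)).toLinearMap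

@[simp] lemma iL_apply (a : A) : iL (k := k) (A := A) (H := H) a = a ⊗ₜ[k] 1 := rfl
@[simp] lemma iR_apply (h : H) : iR (k := k) (A := A) (H := H) h = 1 ⊗ₜ[k] h := rfl

lemma conv_jSp_jp : conv (jSp p j) (jp p j) = convOne := by
  refine LinearMap.ext fun a => ?_
  obtain r := Coalgebra.Repr.arbitrary k a
  rw [conv_repr _ _ r, convOne_apply]
  calc ∑ i ∈ r.index, jSp p j (r.left i) * jp p j (r.right i)
      = j (∑ i ∈ (reprMap p r).index,
            𝒮 ((reprMap p r).left i) * (reprMap p r).right i) := by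
        rw [map_sum]
        exact Finset.sum_congr rfl fun i _ => by
          simp only [reprMap_left, reprMap_right, map_mul, jSp_apply, jp_apply]
    _ = j (ε (p a) • 1) := by rw [HopfAlgebra.sum_antipode_mul_eq_smul (reprMap p r)]
    _ = ε a • 1 := by rw [map_smul, map_one, CoalgHomClass.counit_comp_apply]

lemma conv_jp_jSp : conv (jp p j) (jSp p j) = convOne := by
  refine LinearMap.ext fun a => ?_
  obtain r := Coalgebra.Repr.arbitrary k a
  rw [conv_repr _ _ r, convOne_apply]
  calc ∑ i ∈ r.index, jp p j (r.left i) * jSp p j (r.right i)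
      = j (∑ i ∈ (reprMap p r).index,
            (reprMap p r).left i * 𝒮 ((reprMap p r).right i)) := by
        rw [map_sum]
        exact Finset.sum_congr rfl fun i _ => by
          simp only [reprMap_left, reprMap_right, map_mul, jSp_apply, jp_apply]
    _ = j (ε (p a) • 1) := by rw [HopfAlgebra.sum_mul_antipode_eq_smul (reprMap p r)]
    _ = ε a • 1 := by rw [map_smul, map_one, CoalgHomClass.counit_comp_apply]

lemma conv_jS_j : conv (jS j) (jLin j) = convOne := by
  refine LinearMap.ext fun h => ?_
  obtain r := Coalgebra.Repr.arbitrary k h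
  rw [conv_repr _ _ r, convOne_apply]
  calc ∑ i ∈ r.index, jS j (r.left i) * jLin j (r.right i)
      = j (∑ i ∈ r.index, 𝒮 (r.left i) * r.right i) := by
        rw [map_sum]
        exact Finset.sum_congr rfl fun i _ => by
          simp only [map_mul, jS_apply, jLin_apply]
    _ = j (ε h • 1) := by rw [HopfAlgebra.sum_antipode_mul_eq_smul r]
    _ = ε h • 1 := by rw [map_smul, map_one]

lemma conv_j_jS : conv (jLin j) (jS j) = convOne := by
  refine LinearMap.ext fun h => ?_
  obtain r := Coalgebra.Repr.arbitrary k h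
  rw [conv_repr _ _ r, convOne_apply]
  calc ∑ i ∈ r.index, jLin j (r.left i) * jS j (r.right i)
      = j (∑ i ∈ r.index, r.left i * 𝒮 (r.right i)) := by
        rw [map_sum]
        exact Finset.sum_congr rfl fun i _ => by
          simp only [map_mul, jS_apply, jLin_apply]
    _ = j (ε h • 1) := by rw [HopfAlgebra.sum_mul_antipode_eq_smul r]
    _ = ε h • 1 := by rw [map_smul, map_one]

lemma rho_eq_conv : rho p = conv iL (iR ∘ₗ pLin p) := by
  refine LinearMap.ext fun a => ?_
  obtain r := Coalgebra.Repr.arbitrary k a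
  rw [conv_repr _ _ r, rho_apply, ← r.eq, map_sum]
  exact Finset.sum_congr rfl fun i _ => by
    simp [Algebra.TensorProduct.tmul_mul_tmul]

lemma rho_jp_eq_conv (hpj : ∀ h, p (j h) = h) :
    rho p ∘ₗ jp p j = conv (iL ∘ₗ jp p j) (iR ∘ₗ pLin p) := by
  refine LinearMap.ext fun a => ?_
  obtain r := Coalgebra.Repr.arbitrary k a
  have h1 : rho p (j (p a)) = ∑ i ∈ r.index, j (p (r.left i)) ⊗ₜ[k] p (r.right i) := by
    have := rho_j_repr p j hpj (p a) (reprMap p r)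
    simpa using this
  rw [LinearMap.comp_apply, conv_repr _ _ r, jp_apply, h1]
  exact Finset.sum_congr rfl fun i _ => by
    simp [Algebra.TensorProduct.tmul_mul_tmul]

lemma rho_j_eq_conv (hpj : ∀ h, p (j h) = h) :
    rho p ∘ₗ jLin j = conv (iL ∘ₗ jLin j) iR := by
  refine LinearMap.ext fun h => ?_
  obtain r := Coalgebra.Repr.arbitrary k h
  rw [LinearMap.comp_apply, conv_repr _ _ r, jLin_apply, rho_j_repr p j hpj h r]
  exact Finset.sum_congr rfl fun i _ => by
    simp [Algebra.TensorProduct.tmul_mul_tmul]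

lemma sum_counit_mul_counit' {c : H} {ι : Type*} (r : Coalgebra.Repr k c ι) :
    ∑ i ∈ r.index, ε (r.left i) * ε (r.right i) = ε c := by
  have h := congrArg (Coalgebra.counit (R := k)) (sum_counit_smul_left r)
  rw [map_sum] at h
  calc ∑ i ∈ r.index, ε (r.left i) * ε (r.right i)
      = ∑ i ∈ r.index, ε (ε (r.right i) • r.left i) := by
        exact Finset.sum_congr rfl fun i _ => by rw [map_smul, smul_eq_mul, mul_comm]
    _ = ε c := h

lemma theta_mulRight (Λ : H) (hΛ : ∀ h : H, h * Λ = ε h • Λ) (a : A) :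
    a * j Λ = theta p j a * j Λ := by
  have hg : (LinearMap.mulRight k (j Λ) ∘ₗ jSp p j : A →ₗ[k] A)
      = LinearMap.toSpanSingleton k A (j Λ) ∘ₗ Coalgebra.counit := by
    refine LinearMap.ext fun c => ?_
    simp only [LinearMap.comp_apply, LinearMap.mulRight_apply, jSp_apply,
      LinearMap.toSpanSingleton_apply]
    rw [← map_mul, hΛ (𝒮 (p c)), map_smul, counit_antipode, CoalgHomClass.counit_comp_apply]
  have key : LinearMap.mulRight k (j Λ) = LinearMap.mulRight k (j Λ) ∘ₗ theta p j := by
    have e1 := conv_toSpan_counit (LinearMap.id : A →ₗ[k] A) (j Λ)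
    rw [LinearMap.comp_id] at e1
    have e2 := conv_mulRight (LinearMap.id : A →ₗ[k] A) (jSp p j) (j Λ)
    calc LinearMap.mulRight k (j Λ)
        = conv LinearMap.id (LinearMap.toSpanSingleton k A (j Λ) ∘ₗ Coalgebra.counit) := e1.symm
      _ = conv LinearMap.id (LinearMap.mulRight k (j Λ) ∘ₗ jSp p j) := by rw [hg]
      _ = LinearMap.mulRight k (j Λ) ∘ₗ conv LinearMap.id (jSp p j) := e2
      _ = LinearMap.mulRight k (j Λ) ∘ₗ theta p j := rfl
  calc a * j Λ = LinearMap.mulRight k (j Λ) a := rfl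
    _ = (LinearMap.mulRight k (j Λ) ∘ₗ theta p j) a := by rw [← key]
    _ = theta p j a * j Λ := rfl

lemma iL_def : iL (k := k) (A := A) (H := H) =
    (Algebra.TensorProduct.includeLeft (R := k) (A := A) (B := H)
      (S := k) : A →ₐ[k] A ⊗[k] H).toLinearMap := rfl

lemma rho_theta (hpj : ∀ h, p (j h) = h) :
    rho p ∘ₗ theta p j = iL ∘ₗ theta p j := by
  have hθjp : conv (theta p j) (jp p j) = LinearMap.id := by
    rw [theta, conv_assoc, conv_jSp_jp, conv_mul_one]
  refine conv_right_cancel (w := rho p ∘ₗ jp p j) (w' := rho p ∘ₗ jSp p j) ?_ ?_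
  · rw [← rhoAlg_toLinearMap, ← conv_comp_algHom, conv_jp_jSp, algHom_comp_convOne]
  · have hL : conv (rho p ∘ₗ theta p j) (rho p ∘ₗ jp p j) = rho p := by
      rw [← rhoAlg_toLinearMap, ← conv_comp_algHom, hθjp, LinearMap.comp_id,
        rhoAlg_toLinearMap]
    have hR : conv (iL ∘ₗ theta p j) (rho p ∘ₗ jp p j) = rho p := by
      rw [rho_jp_eq_conv p j hpj, ← conv_assoc, iL_def, ← conv_comp_algHom, hθjp,
        LinearMap.comp_id, ← iL_def, ← rho_eq_conv]
    rw [hL, hR]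

lemma counit_theta (a : A) : ε (theta p j a) = ε a := by
  obtain r := Coalgebra.Repr.arbitrary k a
  rw [theta, conv_repr _ _ r, map_sum]
  calc ∑ i ∈ r.index, ε (LinearMap.id (r.left i) * jSp p j (r.right i))
      = ∑ i ∈ r.index, ε (r.left i) * ε (r.right i) := by
        refine Finset.sum_congr rfl fun i _ => ?_
        rw [Bialgebra.counit_mul, LinearMap.id_coe, id_eq, jSp_apply,
          CoalgHomClass.counit_comp_apply, counit_antipode, CoalgHomClass.counit_comp_apply]
    _ = ε a := sum_counit_mul_counit' r

/-- `F r (h) = ∑ j(h₁) * (r * j(S h₂))`. -/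
noncomputable def Fmap (r : A) : H →ₗ[k] A :=
  conv (jLin j) (LinearMap.mulLeft k r ∘ₗ jS j)

lemma mulLeft_convOne (r : A) :
    LinearMap.mulLeft k r ∘ₗ (convOne (k := k) (C := H) (M := A)) =
      LinearMap.toSpanSingleton k A r ∘ₗ Coalgebra.counit := by
  refine LinearMap.ext fun c => ?_
  simp only [LinearMap.comp_apply, convOne_apply, LinearMap.mulLeft_apply,
    LinearMap.toSpanSingleton_apply, mul_smul_comm, mul_one]

lemma conv_F_j (r : A) :
    conv (Fmap j r) (jLin j) = LinearMap.mulRight k r ∘ₗ jLin j := by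
  rw [Fmap, conv_assoc, conv_mulLeft_left, conv_jS_j, mulLeft_convOne, conv_toSpan_counit]

lemma conv_jS_F (r : A) :
    conv (jS j) (Fmap j r) = LinearMap.mulLeft k r ∘ₗ jS j := by
  rw [Fmap, ← conv_assoc, conv_jS_j, conv_one_mul]

lemma conv_rhoj_rhojS : conv (rho p ∘ₗ jLin j) (rho p ∘ₗ jS j) = convOne := by
  rw [← rhoAlg_toLinearMap, ← conv_comp_algHom, conv_j_jS, algHom_comp_convOne]

lemma rho_F (hpj : ∀ h, p (j h) = h) (r : A) (hr : rho p r = r ⊗ₜ[k] 1) :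
    rho p ∘ₗ Fmap j r = iL ∘ₗ Fmap j r := by
  refine conv_right_cancel (w := rho p ∘ₗ jLin j) (w' := rho p ∘ₗ jS j)
    (conv_rhoj_rhojS p j) ?_
  have hq : rho p ∘ₗ (LinearMap.mulRight k r ∘ₗ jLin j) =
      LinearMap.mulRight k (r ⊗ₜ[k] (1 : H)) ∘ₗ (rho p ∘ₗ jLin j) := by
    refine LinearMap.ext fun h => ?_
    simp only [LinearMap.comp_apply, LinearMap.mulRight_apply, jLin_apply]
    rw [rho_mul, hr]
  have hL : conv (rho p ∘ₗ Fmap j r) (rho p ∘ₗ jLin j) =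
      LinearMap.mulRight k (r ⊗ₜ[k] (1 : H)) ∘ₗ (rho p ∘ₗ jLin j) := by
    rw [← rhoAlg_toLinearMap, ← conv_comp_algHom, conv_F_j, ← LinearMap.comp_assoc,
      LinearMap.comp_assoc, rhoAlg_toLinearMap]
    exact hq
  have hR : conv (iL ∘ₗ Fmap j r) (rho p ∘ₗ jLin j) =
      LinearMap.mulRight k (r ⊗ₜ[k] (1 : H)) ∘ₗ (rho p ∘ₗ jLin j) := by
    rw [rho_j_eq_conv p j hpj, ← conv_assoc, iL_def, ← conv_comp_algHom, conv_F_j, ← iL_def]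
    refine LinearMap.ext fun h => ?_
    obtain rh := Coalgebra.Repr.arbitrary k h
    rw [conv_repr _ _ rh, LinearMap.comp_apply, conv_repr _ _ rh, LinearMap.mulRight_apply,
      Finset.sum_mul]
    refine Finset.sum_congr rfl fun i _ => ?_
    simp [Algebra.TensorProduct.tmul_mul_tmul]
  rw [hL, hR]

lemma counit_F (r : A) (h : H) : ε (Fmap j r h) = ε r * ε h := by
  obtain rh := Coalgebra.Repr.arbitrary k h
  rw [Fmap, conv_repr _ _ rh, map_sum]
  calc ∑ i ∈ rh.index, ε (jLin j (rh.left i) * (LinearMap.mulLeft k r ∘ₗ jS j) (rh.right i))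
      = ∑ i ∈ rh.index, ε r * (ε (rh.left i) * ε (rh.right i)) := by
        refine Finset.sum_congr rfl fun i _ => ?_
        simp only [LinearMap.comp_apply, LinearMap.mulLeft_apply, jLin_apply, jS_apply]
        rw [Bialgebra.counit_mul, Bialgebra.counit_mul, CoalgHomClass.counit_comp_apply,
          CoalgHomClass.counit_comp_apply, counit_antipode]
        ring
    _ = ε r * ε h := by rw [← Finset.mul_sum, sum_counit_mul_counit' rh]

lemma absorb (hpj : ∀ h, p (j h) = h) (x : A)
    (hxint : ∀ r : A,
      TensorProduct.map (LinearMap.id : A →ₗ[k] A) (p : A →ₗ[k] H)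
          (Coalgebra.comul (R := k) r) = r ⊗ₜ[k] 1 →
        r * x = ε r • x)
    (r : A) (hr : rho p r = r ⊗ₜ[k] 1) (Γ : H) :
    r * (j (𝒮 Γ) * x) = ε r • (j (𝒮 Γ) * x) := by
  obtain rΓ := Coalgebra.Repr.arbitrary k Γ
  have h1 : r * j (𝒮 Γ) = ∑ i ∈ rΓ.index, j (𝒮 (rΓ.left i)) * Fmap j r (rΓ.right i) := by
    have h0 := congrArg (fun f : H →ₗ[k] A => f Γ) (conv_jS_F j r)
    simp only [LinearMap.comp_apply, LinearMap.mulLeft_apply, jS_apply] at h0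
    rw [← h0, conv_repr _ _ rΓ]
    exact Finset.sum_congr rfl fun i _ => by rw [jS_apply]
  calc r * (j (𝒮 Γ) * x) = (r * j (𝒮 Γ)) * x := (mul_assoc _ _ _).symm
    _ = ∑ i ∈ rΓ.index, j (𝒮 (rΓ.left i)) * (Fmap j r (rΓ.right i) * x) := by
        rw [h1, Finset.sum_mul]
        exact Finset.sum_congr rfl fun i _ => mul_assoc _ _ _
    _ = ∑ i ∈ rΓ.index, ε r • (ε (rΓ.right i) • (j (𝒮 (rΓ.left i)) * x)) := by
        refine Finset.sum_congr rfl fun i _ => ?_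
        have hco : TensorProduct.map (LinearMap.id : A →ₗ[k] A) (p : A →ₗ[k] H)
            (Coalgebra.comul (R := k) (Fmap j r (rΓ.right i))) = Fmap j r (rΓ.right i) ⊗ₜ[k] 1 := by
          have := congrArg (fun f : H →ₗ[k] A ⊗[k] H => f (rΓ.right i)) (rho_F p j hpj r hr)
          simpa only [LinearMap.comp_apply, rho_apply, iL_apply] using this
        rw [hxint _ hco, counit_F, mul_smul, mul_smul_comm, mul_smul_comm]
    _ = ε r • (j (𝒮 Γ) * x) := by
        rw [← Finset.smul_sum]
        congr 1
        calc ∑ i ∈ rΓ.index, ε (rΓ.right i) • (j (𝒮 (rΓ.left i)) * x)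
            = (∑ i ∈ rΓ.index, ε (rΓ.right i) • j (𝒮 (rΓ.left i))) * x := by
              rw [Finset.sum_mul]
              exact Finset.sum_congr rfl fun i _ => (smul_mul_assoc _ _ _).symm
          _ = j (𝒮 (∑ i ∈ rΓ.index, ε (rΓ.right i) • rΓ.left i)) * x := by
              rw [map_sum, map_sum]
              exact congrArg (· * x) (Finset.sum_congr rfl fun i _ => by
                rw [map_smul, map_smul])
          _ = j (𝒮 Γ) * x := by rw [sum_counit_smul_left]

section Antipode

variable (Λ : H)

lemma ELI2 (hΛ : ∀ h : H, h * Λ = ε h • Λ) (h : H) :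
    ((1 : H) ⊗ₜ[k] h) * Coalgebra.comul (R := k) Λ =
      (𝒮 h ⊗ₜ[k] (1 : H)) * Coalgebra.comul (R := k) Λ := by
  set iLH : H →ₗ[k] H ⊗[k] H :=
    (Algebra.TensorProduct.includeLeft (R := k) (A := H) (B := H)
      (S := k) : H →ₐ[k] H ⊗[k] H).toLinearMap with hiLH
  set iRH : H →ₗ[k] H ⊗[k] H :=
    (Algebra.TensorProduct.includeRight (R := k) (A := H) (B := H)).toLinearMap with hiRH
  have hcm : (Coalgebra.comul : H →ₗ[k] H ⊗[k] H) ∘ₗ LinearMap.mulRight k Λ =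
      LinearMap.mulRight k (Coalgebra.comul (R := k) Λ) ∘ₗ Coalgebra.comul := by
    refine LinearMap.ext fun c => ?_
    simp only [LinearMap.comp_apply, LinearMap.mulRight_apply, Bialgebra.comul_mul]
  have hdelta : (Coalgebra.comul : H →ₗ[k] H ⊗[k] H) = conv iLH iRH := by
    refine LinearMap.ext fun c => ?_
    obtain r := Coalgebra.Repr.arbitrary k c
    rw [conv_repr _ _ r, ← r.eq]
    exact (Finset.sum_congr rfl fun i _ => by
      simp [hiLH, hiRH, Algebra.TensorProduct.tmul_mul_tmul]).symm
  have hSL : conv (iLH ∘ₗ 𝒮) iLH = convOne := by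
    have h0 := conv_comp_algHom
      (φ := (Algebra.TensorProduct.includeLeft (R := k) (A := H) (B := H)
        (S := k) : H →ₐ[k] H ⊗[k] H)) 𝒮 (LinearMap.id : H →ₗ[k] H)
    rw [conv_antipode_id, algHom_comp_convOne, LinearMap.comp_id] at h0
    rw [← hiLH] at h0
    exact h0.symm
  have hmr : LinearMap.mulRight k Λ =
      LinearMap.toSpanSingleton k H Λ ∘ₗ Coalgebra.counit := by
    refine LinearMap.ext fun c => ?_
    simpa using hΛ c
  have hcm2 : (Coalgebra.comul : H →ₗ[k] H ⊗[k] H) ∘ₗ LinearMap.mulRight k Λ =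
      LinearMap.toSpanSingleton k (H ⊗[k] H) (Coalgebra.comul (R := k) Λ) ∘ₗ
        Coalgebra.counit := by
    rw [hmr]
    refine LinearMap.ext fun c => ?_
    simp
  have ev1 : conv (iLH ∘ₗ 𝒮) ((Coalgebra.comul : H →ₗ[k] H ⊗[k] H) ∘ₗ LinearMap.mulRight k Λ) =
      LinearMap.mulRight k (Coalgebra.comul (R := k) Λ) ∘ₗ iRH := by
    rw [hcm]
    have : conv (iLH ∘ₗ 𝒮)
        (LinearMap.mulRight k (Coalgebra.comul (R := k) Λ) ∘ₗ (Coalgebra.comul : H →ₗ[k] H ⊗[k] H)) =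
        LinearMap.mulRight k (Coalgebra.comul (R := k) Λ) ∘ₗ conv (iLH ∘ₗ 𝒮) Coalgebra.comul :=
      conv_mulRight _ _ _
    rw [this, hdelta, ← conv_assoc, hSL, conv_one_mul]
  have ev2 : conv (iLH ∘ₗ 𝒮) ((Coalgebra.comul : H →ₗ[k] H ⊗[k] H) ∘ₗ LinearMap.mulRight k Λ) =
      LinearMap.mulRight k (Coalgebra.comul (R := k) Λ) ∘ₗ (iLH ∘ₗ 𝒮) := by
    rw [hcm2, conv_toSpan_counit]
  have := ev1.symm.trans ev2
  have happ := congrArg (fun f : H →ₗ[k] H ⊗[k] H => f h) this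
  simpa [hiLH, hiRH] using happ

/-- `ψ ⇀ Λ = ∑ ψ(Λ₁) Λ₂`. -/
noncomputable def thetaFun (ψ : H →ₗ[k] k) : H :=
  TensorProduct.lid k H (TensorProduct.map ψ LinearMap.id (Coalgebra.comul (R := k) Λ))

lemma mul_thetaFun (hΛ : ∀ h : H, h * Λ = ε h • Λ) (ψ : H →ₗ[k] k) (h : H) :
    h * thetaFun Λ ψ = thetaFun Λ (ψ ∘ₗ LinearMap.mulLeft k (𝒮 h)) := by
  rw [thetaFun, lid_map_mul_left ψ h, ELI2 Λ hΛ h, lid_map_antipode_mul, thetaFun]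

lemma thetaFun_sum {ι : Type*} (s : Finset ι) (ψ : ι → (H →ₗ[k] k)) :
    thetaFun Λ (∑ i ∈ s, ψ i) = ∑ i ∈ s, thetaFun Λ (ψ i) := by
  simp only [thetaFun]
  rw [← map_sum]
  congr 1
  induction (Coalgebra.comul (R := k) Λ) using TensorProduct.induction_on with
  | zero => simp
  | tmul u v => simp [TensorProduct.sum_tmul, LinearMap.sum_apply]
  | add w₁ w₂ ih₁ ih₂ => simp [ih₁, ih₂, Finset.sum_add_distrib]

lemma thetaFun_zero : thetaFun Λ (0 : H →ₗ[k] k) = 0 := by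
  simp only [thetaFun]
  have : TensorProduct.map (0 : H →ₗ[k] k) (LinearMap.id : H →ₗ[k] H)
      (Coalgebra.comul (R := k) Λ) = 0 := by
    induction (Coalgebra.comul (R := k) Λ) using TensorProduct.induction_on with
    | zero => simp
    | tmul u v => simp
    | add w₁ w₂ ih₁ ih₂ => simp [ih₁, ih₂]
  rw [this, map_zero]

lemma exists_thetaFun_one [FiniteDimensional k H] (hΛ : ∀ h : H, h * Λ = ε h • Λ)
    (hne : Λ ≠ 0) : ∃ ψ : H →ₗ[k] k, thetaFun Λ ψ = 1 := by
  -- a functional with ψ₀ Λ = 1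
  obtain ⟨φ, hφ⟩ : ∃ φ : H →ₗ[k] k, φ Λ ≠ 0 := by
    by_contra hcon
    push_neg at hcon
    exact hne ((Module.forall_dual_apply_eq_zero_iff k Λ).mp hcon)
  set ψ₀ : H →ₗ[k] k := (φ Λ)⁻¹ • φ with hψ₀
  have hψ₀Λ : ψ₀ Λ = 1 := by
    simp [hψ₀, inv_mul_cancel₀ hφ]
  set D : H →ₗ[k] H := conv ((Algebra.linearMap k H) ∘ₗ ψ₀) 𝒮 with hD
  have hDid : conv D LinearMap.id = (Algebra.linearMap k H) ∘ₗ ψ₀ := by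
    rw [hD, conv_assoc, conv_antipode_id, conv_mul_one]
  set b := Module.finBasis k H with hb
  set rB : Coalgebra.Repr k Λ (Fin (Module.finrank k H)) :=
    { index := Finset.univ
      left := fun i => b i
      right := fun i => thetaFun Λ (b.coord i)
      eq := by simpa only [thetaFun] using basis_expand b (Coalgebra.comul (R := k) Λ) } with hrB
  have h1 : (1 : H) = ∑ i ∈ (Finset.univ : Finset (Fin (Module.finrank k H))),
      D (b i) * thetaFun Λ (b.coord i) := by
    have e := conv_repr D LinearMap.id rB
    rw [hDid] at e
    have : (Algebra.linearMap k H ∘ₗ ψ₀) Λ = 1 := by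
      simp [hψ₀Λ]
    rw [this] at e
    simpa [hrB] using e
  refine ⟨∑ i ∈ (Finset.univ : Finset (Fin (Module.finrank k H))),
    (b.coord i) ∘ₗ LinearMap.mulLeft k (𝒮 (D (b i))), ?_⟩
  rw [thetaFun_sum, h1]
  exact Finset.sum_congr rfl fun i _ => (mul_thetaFun Λ hΛ (b.coord i) (D (b i))).symm

lemma antipode_surjective [FiniteDimensional k H] (hΛ : ∀ h : H, h * Λ = ε h • Λ)
    (hne : Λ ≠ 0) : Function.Surjective (𝒮 : H →ₗ[k] H) := by
  obtain ⟨ψ, hψ⟩ := exists_thetaFun_one Λ hΛ hne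
  have hinj : Function.Injective (𝒮 : H →ₗ[k] H) := by
    rw [← LinearMap.ker_eq_bot, LinearMap.ker_eq_bot']
    intro h hh
    have h0 : LinearMap.mulLeft k (𝒮 h) = 0 := by
      rw [hh]
      exact LinearMap.ext fun y => zero_mul y
    calc h = h * thetaFun Λ ψ := by rw [hψ, mul_one]
      _ = thetaFun Λ (ψ ∘ₗ LinearMap.mulLeft k (𝒮 h)) := mul_thetaFun Λ hΛ ψ h
      _ = 0 := by rw [h0, LinearMap.comp_zero, thetaFun_zero]
  exact LinearMap.injective_iff_surjective.mp hinj

end Antipode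

end Main

end SmashAux
open SmashAux in
/-- Let `A` be a finite dimensional Hopf algebra with a Hopf algebra projection
`p : A → H`, section `j : H → A`, `p ∘ j = id_H`, and coinvariants
`R = A^{co H} = {a | (id ⊗ p)(Δ a) = a ⊗ 1}`.  If `x ∈ R` is a left integral of `R`
(`r x = ε(r) x` for all `r ∈ R`) and `Λ` is a left integral of `H`, then the element
`Λx = (Λ₁·x) j(Λ₂)` of `A ≅ R#H`, which equals the product `j(Λ) x` in `A`, is a left
integral of `A`: `a (j(Λ) x) = ε(a) (j(Λ) x)` for all `a ∈ A`. -/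
theorem smash_left_integral {k A H : Type*} [Field k]
    [Ring A] [HopfAlgebra k A] [FiniteDimensional k A] [Ring H] [HopfAlgebra k H]
    (p : A →ₐc[k] H) (j : H →ₐc[k] A) (hpj : ∀ h, p (j h) = h)
    (x : A)
    (hxR : TensorProduct.map (LinearMap.id : A →ₗ[k] A) (p : A →ₗ[k] H)
        (Coalgebra.comul (R := k) x) = x ⊗ₜ[k] 1)
    (hxint : ∀ r : A,
      TensorProduct.map (LinearMap.id : A →ₗ[k] A) (p : A →ₗ[k] H)
          (Coalgebra.comul (R := k) r) = r ⊗ₜ[k] 1 →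
        r * x = Coalgebra.counit (R := k) r • x)
    (Λ : H) (hΛ : ∀ h : H, h * Λ = Coalgebra.counit (R := k) h • Λ) :
    ∀ a : A, a * (j Λ * x) = Coalgebra.counit (R := k) a • (j Λ * x) := by
  intro a
  by_cases hne : Λ = 0
  · subst hne
    simp only [map_zero, zero_mul, smul_zero, mul_zero]
  · have hinj : Function.Injective (jLin j) := by
      intro h₁ h₂ hh
      have := congrArg p hh
      simpa only [jLin_apply, hpj] using this
    haveI hfin : FiniteDimensional k H := Module.Finite.of_injective (jLin j) hinj
    obtain ⟨Γ, hΓ⟩ := antipode_surjective Λ hΛ hne Λ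
    have hrθ : rho p (theta p j a) = theta p j a ⊗ₜ[k] 1 := by
      have h0 := congrArg (fun f : A →ₗ[k] A ⊗[k] H => f a) (rho_theta p j hpj)
      simpa only [LinearMap.comp_apply, iL_apply] using h0
    calc a * (j Λ * x) = (a * j Λ) * x := (mul_assoc _ _ _).symm
      _ = (theta p j a * j Λ) * x := by rw [theta_mulRight p j Λ hΛ a]
      _ = theta p j a * (j Λ * x) := mul_assoc _ _ _
      _ = theta p j a * (j (HopfAlgebra.antipode (R := k) Γ) * x) := by rw [hΓ]
      _ = Coalgebra.counit (R := k) (theta p j a) •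
            (j (HopfAlgebra.antipode (R := k) Γ) * x) :=
        absorb p j hpj x hxint (theta p j a) hrθ Γ
      _ = Coalgebra.counit (R := k) a • (j Λ * x) := by rw [counit_theta, hΓ]
end
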